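/- arXiv:2309.09350 — 5 statements merged into one kernel-verified Lean document; each statement's English description precedes it below -/
import Mathlib

section
/- The unitary U defined in terms of the wavelet filter coefficients admits the decomposition U = Σ_{ℓ=0}^{M−1} h_ℓ U_ℓ, where U_ℓ = P_ℓ if ℓ is odd and U_ℓ = (Z ⊗ I_{n−1}) P_ℓ if ℓ is even. -/
open Matrix

/-- `P_ℓ = Σ_{j=0}^{N/2−1}(|j⟩⟨2j+ℓ mod N| + |N/2+j⟩⟨2j+1−ℓ mod N|)` on `N = 2^n`. -/
def Pmat (n ℓ : ℕ) : Matrix (Fin (2^n)) (Fin (2^n)) ℂ :=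
  fun r c =>
    if (r : ℕ) < 2^n / 2 then
      (if (c : ℕ) = (2 * (r : ℕ) + ℓ) % 2^n then 1 else 0)
    else
      (if (c : ℕ) = (2 * ((r : ℕ) - 2^n / 2) + 1 + (2^n - ℓ)) % 2^n then 1 else 0)

/-- `Z ⊗ I_{n−1}`: diagonal, `+1` on the first `N/2` basis vectors, `−1` on the last `N/2`. -/
def Zmat (n : ℕ) : Matrix (Fin (2^n)) (Fin (2^n)) ℂ :=
  fun i j => if i = j then (if (i : ℕ) < 2^n / 2 then 1 else -1) else 0

/-- The `N×N` matrix `U`: upper half `H_{ic} = h_{(c−2i) mod N}` (rows `0 ≤ i < N/2`)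
and lower half `G'_{ic} = (−1)^{2i+2−c} h_{(2i+1−c) mod N}` (rows `N/2 ≤ row < N`,
`i = row − N/2`), the filter `h : ℤ → ℝ` vanishing outside `[0, M−1]`.
(The row-index of the filter in the lower half is `2i+1−c`, matching the
displayed kernel matrix; the sign `(−1)^{2i+2−c}` is as in the paper.) -/
noncomputable def Umat (n : ℕ) (h : ℤ → ℝ) : Matrix (Fin (2^n)) (Fin (2^n)) ℂ :=
  fun r c =>
    if (r : ℕ) < 2^n / 2 then
      ((h (((c : ℤ) - 2 * ((r : ℕ) : ℤ)) % (2^n : ℤ))) : ℂ)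
    else
      ((((-1 : ℝ) ^ ((2 * ((((r : ℕ) - 2^n / 2 : ℕ)) : ℤ) + 2 - (c : ℤ))) *
        h ((2 * ((((r : ℕ) - 2^n / 2 : ℕ)) : ℤ) + 1 - (c : ℤ)) % (2^n : ℤ))) : ℝ) : ℂ)

/-! Compare entries. In row `r < N/2`, `P_ℓ` has its unique `1` in column `c` iff
`ℓ ≡ c - 2r (mod N)`, and in row `N/2 + i` iff `ℓ ≡ 2i + 1 - c (mod N)`. As `0 ≤ ℓ < M ≤ N`, at
most one `ℓ` contributes, namely the filter index appearing in `U`. In the lower half, `Z` gives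
the even terms the sign `-1`, matching `(-1)^(2i+2-c) = -(-1)^ℓ` because `N` is even. -/

open Finset

lemma eq_emod_iff_modEq {N c a : ℤ} (hc0 : 0 ≤ c) (hcN : c < N) : c = a % N ↔ c ≡ a [ZMOD N] := by
  rw [Int.ModEq, Int.emod_eq_of_lt hc0 hcN]

lemma modEq_add_iff_modEq_sub {N c x ℓ : ℤ} : c ≡ x + ℓ [ZMOD N] ↔ ℓ ≡ c - x [ZMOD N] := by
  rw [Int.modEq_iff_dvd, Int.modEq_iff_dvd, ← dvd_neg, neg_sub, sub_sub]

lemma modEq_sub_iff_modEq_sub {N c x ℓ : ℤ} : c ≡ x - ℓ [ZMOD N] ↔ ℓ ≡ x - c [ZMOD N] := by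
  rw [Int.modEq_iff_dvd, Int.modEq_iff_dvd, sub_sub, add_comm, ← sub_sub]

lemma neg_one_zpow_emod {R : Type*} [DivisionRing R] {N : ℤ} (hN : Even N) (x : ℤ) :
    (-1 : R) ^ (x % N) = (-1) ^ x := by
  rw [Int.emod_def, zpow_sub₀ (by norm_num), _root_.zpow_mul, hN.neg_one_zpow, _root_.one_zpow,
    div_one]

lemma sum_range_ite_natCast_eq {R : Type*} [AddCommMonoid R] (M : ℕ) (F : ℤ → R)
    {a : ℤ} (ha : 0 ≤ a) (hF : (M : ℤ) ≤ a → F a = 0) :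
    ∑ ℓ ∈ range M, (if (ℓ : ℤ) = a then F ℓ else 0) = F a := by
  lift a to ℕ using ha
  simp only [Nat.cast_inj]
  rw [sum_ite_eq' (range M) a (fun ℓ => F ℓ)]
  split_ifs with haM
  · rfl
  · exact (hF (by exact_mod_cast not_lt.mp (mem_range.not.mp haM))).symm

lemma Zmat_mul_apply (n : ℕ) (A : Matrix (Fin (2^n)) (Fin (2^n)) ℂ) (r c : Fin (2^n)) :
    (Zmat n * A) r c = (if (r : ℕ) < 2^n / 2 then 1 else -1) * A r c := by
  simp [Matrix.mul_apply, Zmat]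

lemma lcuTerm_apply (n ℓ : ℕ) (r c : Fin (2^n)) :
    (if ℓ % 2 = 1 then Pmat n ℓ else Zmat n * Pmat n ℓ) r c =
      (if (r : ℕ) < 2^n / 2 then 1 else -(-1) ^ ℓ) * Pmat n ℓ r c := by
  split_ifs with hℓ hr hr
  · simp
  · simp [(Nat.odd_iff.mpr hℓ).neg_one_pow]
  · simp [Zmat_mul_apply, hr]
  · simp [Zmat_mul_apply, hr, (Nat.even_iff.mpr (Nat.mod_two_ne_one.mp hℓ)).neg_one_pow]

lemma Pmat_apply_of_lt {n ℓ : ℕ} {r : Fin (2^n)} (c : Fin (2^n)) (hr : (r : ℕ) < 2^n / 2)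
    (hℓ : ℓ < 2^n) :
    Pmat n ℓ r c = if (ℓ : ℤ) = ((c : ℤ) - 2 * ((r : ℕ) : ℤ)) % 2^n then 1 else 0 := by
  have hcond : (c : ℕ) = (2 * r + ℓ) % 2^n ↔ (ℓ : ℤ) = ((c : ℤ) - 2 * ((r : ℕ) : ℤ)) % 2^n := by
    rw [← Nat.cast_inj (R := ℤ)]
    push_cast
    rw [eq_emod_iff_modEq (by positivity) (by exact_mod_cast c.isLt),
      eq_emod_iff_modEq (by positivity) (by exact_mod_cast hℓ), modEq_add_iff_modEq_sub]
  simp only [Pmat, if_pos hr, hcond]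

lemma Pmat_apply_of_not_lt {n ℓ : ℕ} {r : Fin (2^n)} (c : Fin (2^n)) (hr : ¬ (r : ℕ) < 2^n / 2)
    (hℓ : ℓ < 2^n) :
    Pmat n ℓ r c = if (ℓ : ℤ) = (2 * (((r : ℕ) - 2^n / 2 : ℕ) : ℤ) + 1 - (c : ℤ)) % 2^n
      then 1 else 0 := by
  set i := (r : ℕ) - 2^n / 2
  have hcond : (c : ℕ) = (2 * i + 1 + (2^n - ℓ)) % 2^n ↔
      (ℓ : ℤ) = (2 * (i : ℤ) + 1 - (c : ℤ)) % 2^n := by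
    rw [← Nat.cast_inj (R := ℤ)]
    push_cast [Nat.cast_sub hℓ.le]
    rw [show 2 * (i : ℤ) + 1 + (2^n - ℓ) = 2 * i + 1 - ℓ + 2^n by ring, Int.add_emod_right,
      eq_emod_iff_modEq (by positivity) (by exact_mod_cast c.isLt),
      eq_emod_iff_modEq (by positivity) (by exact_mod_cast hℓ), modEq_sub_iff_modEq_sub]
  simp only [Pmat, if_neg hr]
  exact if_congr hcond rfl rfl

lemma Umat_apply_of_not_lt {n : ℕ} (hn : 1 ≤ n) (h : ℤ → ℝ) {r : Fin (2^n)} (c : Fin (2^n))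
    (hr : ¬ (r : ℕ) < 2^n / 2) :
    Umat n h r c =
      ((-(-1 : ℝ) ^ ((2 * (((r : ℕ) - 2^n / 2 : ℕ) : ℤ) + 1 - (c : ℤ)) % 2^n) *
        h ((2 * (((r : ℕ) - 2^n / 2 : ℕ) : ℤ) + 1 - (c : ℤ)) % 2^n) : ℝ) : ℂ) := by
  have hN : Even ((2 : ℤ) ^ n) := (Int.even_pow' (by omega)).mpr even_two
  have hsign (x : ℤ) : (-1 : ℝ) ^ (x + 1) = -(-1) ^ x := by
    rw [zpow_add_one₀ (by norm_num), mul_neg_one]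
  rw [Umat, if_neg hr, neg_one_zpow_emod hN, ← hsign]
  ring_nf

lemma sum_lcuTerm_apply_of_lt {n M : ℕ} (hM : M ≤ 2^n) (h : ℤ → ℝ)
    (hsupp : ∀ k : ℤ, (M : ℤ) ≤ k → h k = 0) {r : Fin (2^n)} (c : Fin (2^n))
    (hr : (r : ℕ) < 2^n / 2) :
    (∑ ℓ ∈ range M, ((h ℓ : ℝ) : ℂ) • (if ℓ % 2 = 1 then Pmat n ℓ else Zmat n * Pmat n ℓ)) r c =
      h (((c : ℤ) - 2 * ((r : ℕ) : ℤ)) % 2^n) := by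
  rw [Matrix.sum_apply, ← sum_range_ite_natCast_eq M (fun k => (h k : ℂ))
    (Int.emod_nonneg _ (by positivity)) (fun hk => by simp [hsupp _ hk])]
  refine sum_congr rfl fun ℓ hℓ => ?_
  rw [Matrix.smul_apply, lcuTerm_apply, if_pos hr,
    Pmat_apply_of_lt c hr ((mem_range.mp hℓ).trans_le hM)]
  split_ifs <;> simp

lemma sum_lcuTerm_apply_of_not_lt {n M : ℕ} (hM : M ≤ 2^n) (h : ℤ → ℝ)
    (hsupp : ∀ k : ℤ, (M : ℤ) ≤ k → h k = 0) {r : Fin (2^n)} (c : Fin (2^n))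
    (hr : ¬ (r : ℕ) < 2^n / 2) :
    (∑ ℓ ∈ range M, ((h ℓ : ℝ) : ℂ) • (if ℓ % 2 = 1 then Pmat n ℓ else Zmat n * Pmat n ℓ)) r c =
      ((-(-1 : ℝ) ^ ((2 * (((r : ℕ) - 2^n / 2 : ℕ) : ℤ) + 1 - (c : ℤ)) % 2^n) *
        h ((2 * (((r : ℕ) - 2^n / 2 : ℕ) : ℤ) + 1 - (c : ℤ)) % 2^n) : ℝ) : ℂ) := by
  rw [Matrix.sum_apply, ← sum_range_ite_natCast_eq M
    (fun k => ((-(-1 : ℝ) ^ k * h k : ℝ) : ℂ))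
    (Int.emod_nonneg _ (by positivity)) (fun hk => by simp [hsupp _ hk])]
  refine sum_congr rfl fun ℓ hℓ => ?_
  rw [Matrix.smul_apply, lcuTerm_apply, if_neg hr,
    Pmat_apply_of_not_lt c hr ((mem_range.mp hℓ).trans_le hM)]
  split_ifs <;> push_cast [zpow_natCast] <;> ring

theorem U_lcu_decomposition_general (n M : ℕ) (hn : 1 ≤ n)
    (hNM : 2 * M ≤ 2^n) (h : ℤ → ℝ)
    (hsupp : ∀ k : ℤ, (k < 0 ∨ (M : ℤ) ≤ k) → h k = 0) :
    Umat n h =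
      ∑ ℓ ∈ Finset.range M,
        ((h ℓ : ℝ) : ℂ) • (if ℓ % 2 = 1 then Pmat n ℓ else Zmat n * Pmat n ℓ) := by
  have hM : M ≤ 2^n := by omega
  have hsupp' : ∀ k : ℤ, (M : ℤ) ≤ k → h k = 0 := fun k hk => hsupp k (.inr hk)
  ext r c
  by_cases hr : (r : ℕ) < 2^n / 2
  · rw [sum_lcuTerm_apply_of_lt hM h hsupp' c hr, Umat, if_pos hr]
  · rw [sum_lcuTerm_apply_of_not_lt hM h hsupp' c hr, Umat_apply_of_not_lt hn h c hr]

/-- the unitary `U` admits the LCU decomposition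
`U = Σ_{ℓ=0}^{M−1} h_ℓ U_ℓ`, where `U_ℓ = P_ℓ` for odd `ℓ` and
`U_ℓ = (Z ⊗ I_{n−1}) P_ℓ` for even `ℓ`. -/
theorem U_lcu_decomposition (n M K : ℕ) (hn : 1 ≤ n) (hK : 0 < K) (hM : M = 2 * K)
    (hNM : 2 * M ≤ 2^n) (h : ℤ → ℝ)
    (hsupp : ∀ k : ℤ, (k < 0 ∨ (M : ℤ) ≤ k) → h k = 0) :
    Umat n h =
      ∑ ℓ ∈ Finset.range M,
        ((h ℓ : ℝ) : ℂ) • (if ℓ % 2 = 1 then Pmat n ℓ else Zmat n * Pmat n ℓ) :=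
  U_lcu_decomposition_general n M hn hNM h hsupp
end

section
/- If the filter coefficients satisfy Σ_ℓ h_ℓ² = 1 and the shifted orthogonality conditions Σ_ℓ h_ℓ h_{ℓ+2k} = 0 for all k ≠ 0, then the kernel matrix W built from them is unitary. -/
open Matrix

/-- The mirrored filter `g_ℓ = (−1)^ℓ h_{M−1−ℓ}`. -/
noncomputable def gfilter (M : ℕ) (h : ℤ → ℝ) : ℤ → ℝ :=
  fun ℓ => (-1 : ℝ) ^ ℓ * h ((M : ℤ) - 1 - ℓ)

/-- The wavelet kernel matrix `W` on `N = 2^n` dimensions: rows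
`H_{ic} = h_{(c−2i) mod N}` for `0 ≤ i < N/2` and `G_{ic} = g_{(c−2i) mod N}` for the
remaining rows (`i = row − N/2`), with `g_ℓ = (−1)^ℓ h_{M−1−ℓ}`. -/
noncomputable def Wker (n M : ℕ) (h : ℤ → ℝ) : Matrix (Fin (2^n)) (Fin (2^n)) ℂ :=
  fun r c =>
    if (r : ℕ) < 2^n / 2 then
      ((h (((c : ℤ) - 2 * ((r : ℕ) : ℤ)) % (2^n : ℤ))) : ℂ)
    else
      ((gfilter M h (((c : ℤ) - 2 * ((((r : ℕ) - 2^n / 2 : ℕ)) : ℤ)) % (2^n : ℤ))) : ℂ)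

/-!
Each row of `W` is the `N`-periodisation of `h` or of `g`, shifted by an even amount, so the
inner product of two rows is a cyclic correlation `∑_{a<N} f a · g ((a + e) mod N)` at an even
lag `e`. Since both filters vanish outside `[0, M)` and `2M ≤ N`, this equals the ordinary
correlation `∑_ℓ f ℓ · g (ℓ + t)` at the unique lag `t ≡ e (mod N)` with `|t| < M`, and vanishes
if there is none; as `N` is even, `t` is even too. At even lags, `h ⋆ h` is the Kronecker delta
by hypothesis, `g ⋆ g` is `h ⋆ h` reflected, and `h ⋆ g` vanishes because, `M` and `t` being
even, the substitution `ℓ ↦ M - 1 - t - ℓ` reverses its sign.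
-/

open Finset

def SupportedInRange {R : Type*} [Zero R] (M : ℕ) (f : ℤ → R) : Prop :=
  ∀ k : ℤ, (k < 0 ∨ (M : ℤ) ≤ k) → f k = 0

section CyclicCorrelation

variable {R : Type*} [Semiring R] {M N : ℕ} {f g : ℤ → R}

lemma sum_fin_comp_emod_sub [NeZero N] (F : ℤ → R) (s : ℤ) :
    ∑ c : Fin N, F (((c : ℤ) - s) % N) = ∑ c : Fin N, F c := by
  have hN : (0 : ℤ) < N := by exact_mod_cast Nat.pos_of_neZero N
  have hnonneg (x : ℤ) : 0 ≤ x % N := Int.emod_nonneg x hN.ne'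
  have hlt (x : ℤ) : x % N < N := Int.emod_lt_of_pos x hN
  let σ : Fin N → Fin N := fun c => ⟨(((c : ℤ) - s) % N).toNat, by
    have := hnonneg ((c : ℤ) - s); have := hlt ((c : ℤ) - s); omega⟩
  have hσ (c : Fin N) : ((σ c : ℕ) : ℤ) = ((c : ℤ) - s) % N := Int.toNat_of_nonneg (hnonneg _)
  have hσinj : Function.Injective σ := by
    intro c c' hcc'
    have hmod : (c : ℤ) - s ≡ c' - s [ZMOD N] := by
      simpa only [hσ, Int.ModEq] using congrArg (fun x : Fin N => ((x : ℕ) : ℤ)) hcc'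
    replace hmod := hmod.add_right s
    simp only [sub_add_cancel, Int.ModEq] at hmod
    have := Int.emod_eq_of_lt (by positivity) (by exact_mod_cast c.isLt : (c : ℤ) < N)
    have := Int.emod_eq_of_lt (by positivity) (by exact_mod_cast c'.isLt : (c' : ℤ) < N)
    exact Fin.ext (by omega)
  exact Fintype.sum_bijective σ hσinj.bijective_of_finite _ _ fun c => by rw [hσ]

lemma sum_fin_emod_sub_mul_emod_sub [NeZero N] (s s' : ℤ) :
    ∑ c : Fin N, f (((c : ℤ) - s) % N) * g (((c : ℤ) - s') % N) =
      ∑ a ∈ range N, f a * g ((a + (s - s')) % N) := by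
  have hshift (c : ℤ) : (c - s') % N = ((c - s) % N + (s - s')) % N := by
    rw [Int.emod_add_emod]; ring_nf
  simp_rw [hshift]
  rw [sum_fin_comp_emod_sub (fun x => f x * g ((x + (s - s')) % N)) s]
  exact Fin.sum_univ_eq_sum_range (fun a : ℕ => f a * g ((a + (s - s')) % N)) N

lemma sum_range_mul_emod_eq_of_dvd_sub (hf : SupportedInRange M f) (hg : SupportedInRange M g)
    (hMN : 2 * M ≤ N) {e t : ℤ} (het : (N : ℤ) ∣ e - t) (ht₁ : -(M : ℤ) < t) (ht₂ : t < M) :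
    ∑ a ∈ range N, f a * g ((a + e) % N) = ∑ a ∈ range M, f a * g (a + t) := by
  rw [← sum_subset (range_subset_range.2 (by omega : M ≤ N))
    fun a _ ha => by rw [hf a (Or.inr (by simpa using ha)), zero_mul]]
  refine sum_congr rfl fun a ha => ?_
  have ha : (a : ℤ) < M := by simpa using ha
  obtain ⟨k, hk⟩ := het
  rw [show (a : ℤ) + e = a + t + N * k by linarith, Int.add_mul_emod_self_left]
  rcases le_or_gt 0 ((a : ℤ) + t) with h0 | h0
  · rw [Int.emod_eq_of_lt h0 (by omega)]
  · have hwrap : ((a : ℤ) + t) % N = a + t + N := by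
      rw [← Int.add_emod_right, Int.emod_eq_of_lt (by omega) (by omega)]
    rw [hwrap, hg _ (Or.inl h0), hg _ (Or.inr (by omega))]

lemma sum_range_mul_emod_eq_zero (hf : SupportedInRange M f) (hg : SupportedInRange M g)
    {e : ℤ} (hno : ∀ t : ℤ, (N : ℤ) ∣ e - t → -(M : ℤ) < t → (M : ℤ) ≤ t) :
    ∑ a ∈ range N, f a * g ((a + e) % N) = 0 := by
  refine sum_eq_zero fun a _ => ?_
  by_contra hne
  have hfa : ¬((a : ℤ) < 0 ∨ (M : ℤ) ≤ a) := fun h => hne (by rw [hf _ h, zero_mul])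
  have hga : ¬((a + e) % N < 0 ∨ (M : ℤ) ≤ (a + e) % N) := fun h => hne (by rw [hg _ h, mul_zero])
  have hdvd : (N : ℤ) ∣ e - ((a + e) % N - a) := by
    simpa [sub_sub_eq_add_sub, add_comm] using
      (Int.dvd_self_sub_emod : (N : ℤ) ∣ (a + e) - (a + e) % N)
  have := hno _ hdvd (by omega)
  omega

lemma sum_range_mul_emod_of_even (hf : SupportedInRange M f) (hg : SupportedInRange M g)
    (hN : Even N) (hMN : 2 * M ≤ N) {c : R}
    (hcorr : ∀ t : ℤ, Even t → ∑ ℓ ∈ range M, f ℓ * g (ℓ + t) = if t = 0 then c else 0)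
    {e : ℤ} (he : Even e) :
    ∑ a ∈ range N, f a * g ((a + e) % N) = if (N : ℤ) ∣ e then c else 0 := by
  by_cases hrep : ∃ t : ℤ, (N : ℤ) ∣ e - t ∧ -(M : ℤ) < t ∧ t < M
  · obtain ⟨t, het, ht₁, ht₂⟩ := hrep
    have htwo : (2 : ℤ) ∣ e - t := (Int.natCast_dvd_natCast.2 hN.two_dvd).trans het
    have ht : Even t := (Int.even_sub.1 (even_iff_two_dvd.2 htwo)).1 he
    rw [sum_range_mul_emod_eq_of_dvd_sub hf hg hMN het ht₁ ht₂, hcorr t ht]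
    congr 1
    refine propext ⟨fun h => by simpa [h] using het, fun hNe => ?_⟩
    exact Int.eq_zero_of_abs_lt_dvd (by simpa using dvd_sub hNe het)
      (abs_lt.2 ⟨by omega, by omega⟩)
  · push Not at hrep
    rw [sum_range_mul_emod_eq_zero hf hg hrep]
    split_ifs with hNe
    · rcases Nat.eq_zero_or_pos M with hM | hM
      · simpa [hM] using hcorr 0 Even.zero
      · exact absurd (hrep 0 (by simpa using hNe) (by omega)) (by omega)
    · rfl

lemma sum_fin_mul_emod_sub_two_mul (hf : SupportedInRange M f) (hg : SupportedInRange M g)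
    [NeZero N] (hN : Even N) (hMN : 2 * M ≤ N) {c : R}
    (hcorr : ∀ t : ℤ, Even t → ∑ ℓ ∈ range M, f ℓ * g (ℓ + t) = if t = 0 then c else 0)
    (i j : ℕ) (hi : 2 * i < N) (hj : 2 * j < N) :
    ∑ x : Fin N, f (((x : ℤ) - 2 * i) % N) * g (((x : ℤ) - 2 * j) % N) =
      if i = j then c else 0 := by
  rw [sum_fin_emod_sub_mul_emod_sub,
    sum_range_mul_emod_of_even hf hg hN hMN hcorr ⟨(i : ℤ) - j, by ring⟩]
  congr 1
  refine propext ⟨fun hd => ?_, fun hij => by simp [hij]⟩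
  have := Int.eq_zero_of_abs_lt_dvd hd (abs_lt.2 ⟨by omega, by omega⟩)
  omega

end CyclicCorrelation

lemma SupportedInRange.sum_range_eq_finsum {R : Type*} [AddCommMonoid R] {M : ℕ} {F : ℤ → R}
    (hF : SupportedInRange M F) :
    ∑ ℓ ∈ range M, F ℓ = ∑ᶠ ℓ : ℤ, F ℓ := by
  rw [finsum_eq_sum_of_support_subset F (s := (range M).map Nat.castEmbedding), sum_map]
  · rfl
  intro k hk
  have hk : ¬(k < 0 ∨ (M : ℤ) ≤ k) := fun h => hk (hF k h)
  simp only [coe_map, coe_range, Set.mem_image, Set.mem_Iio, Nat.castEmbedding_apply]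
  exact ⟨k.toNat, by omega, by omega⟩

lemma neg_one_zpow_eq_neg_of_odd_sub {α : Type*} [DivisionRing α] {a b : ℤ} (h : Odd (a - b)) :
    (-1 : α) ^ a = -(-1) ^ b := by
  rw [← sub_add_cancel a b, zpow_add₀ (neg_ne_zero.2 one_ne_zero), h.neg_one_zpow, neg_one_mul]

section Filters

variable {M : ℕ} {h : ℤ → ℝ}

lemma SupportedInRange.gfilter (hh : SupportedInRange M h) : SupportedInRange M (gfilter M h) :=
  fun k hk => by rw [_root_.gfilter, hh _ (by omega), mul_zero]

lemma sum_gfilter_mul_gfilter_add (hh : SupportedInRange M h) {t : ℤ} (ht : Even t) :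
    ∑ ℓ ∈ range M, gfilter M h ℓ * gfilter M h (ℓ + t) = ∑ ℓ ∈ range M, h ℓ * h (ℓ + -t) := by
  rw [SupportedInRange.sum_range_eq_finsum (F := fun ℓ => gfilter M h ℓ * gfilter M h (ℓ + t))
      fun k hk => mul_eq_zero_of_left (hh.gfilter k hk) _,
    SupportedInRange.sum_range_eq_finsum (F := fun ℓ => h ℓ * h (ℓ + -t))
      fun k hk => mul_eq_zero_of_left (hh k hk) _,
    ← finsum_comp_equiv (Equiv.subLeft ((M : ℤ) - 1))]
  congr 1
  ext ℓ
  simp only [Equiv.subLeft_apply, gfilter]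
  rw [show (M : ℤ) - 1 - ((M : ℤ) - 1 - ℓ) = ℓ by ring,
    show (M : ℤ) - 1 - ((M : ℤ) - 1 - ℓ + t) = ℓ + -t by ring, mul_mul_mul_comm,
    ← zpow_add₀ (by norm_num),
    Even.neg_one_zpow (by obtain ⟨s, hs⟩ := ht; exact ⟨M - 1 - ℓ + s, by omega⟩), one_mul]

lemma sum_mul_gfilter_add_eq_zero (hM : Even M) (hh : SupportedInRange M h) {t : ℤ}
    (ht : Even t) : ∑ ℓ ∈ range M, h ℓ * gfilter M h (ℓ + t) = 0 := by
  rw [SupportedInRange.sum_range_eq_finsum (F := fun ℓ => h ℓ * gfilter M h (ℓ + t))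
      fun k hk => mul_eq_zero_of_left (hh k hk) _, ← self_eq_neg,
    ← finsum_neg_distrib, ← finsum_comp_equiv (Equiv.subLeft ((M : ℤ) - 1 - t))]
  congr 1
  ext ℓ
  simp only [Equiv.subLeft_apply, gfilter]
  rw [neg_one_zpow_eq_neg_of_odd_sub (a := (M : ℤ) - 1 - t - ℓ + t) (b := ℓ + t)
      (by obtain ⟨m, hm⟩ := hM; obtain ⟨s, hs⟩ := ht; exact ⟨m - ℓ - s - 1, by omega⟩),
    show (M : ℤ) - 1 - ((M : ℤ) - 1 - t - ℓ + t) = ℓ by ring,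
    show (M : ℤ) - 1 - (ℓ + t) = M - 1 - t - ℓ by ring]
  ring

lemma sum_mul_add_of_even (hnorm : ∑ ℓ ∈ range M, (h ℓ) ^ 2 = 1)
    (horth : ∀ k : ℤ, k ≠ 0 → ∑ ℓ ∈ range M, h ℓ * h (ℓ + 2 * k) = 0) {t : ℤ} (ht : Even t) :
    ∑ ℓ ∈ range M, h ℓ * h (ℓ + t) = if t = 0 then 1 else 0 := by
  obtain ⟨k, rfl⟩ := ht
  split_ifs with hk
  · simp [hk, ← hnorm, sq]
  · simpa [two_mul] using horth k (by omega)

end Filters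

theorem Wker_unitary_general (n M K : ℕ) (hn : 1 ≤ n) (hM : M = 2 * K)
    (hNM : 2 * M ≤ 2^n) (h : ℤ → ℝ)
    (hsupp : ∀ k : ℤ, (k < 0 ∨ (M : ℤ) ≤ k) → h k = 0)
    (hnorm : ∑ ℓ ∈ Finset.range M, (h ℓ)^2 = 1)
    (horth : ∀ k : ℤ, k ≠ 0 → ∑ ℓ ∈ Finset.range M, h ℓ * h (ℓ + 2 * k) = 0) :
    Wker n M h ∈ Matrix.unitaryGroup (Fin (2^n)) ℂ := by
  have hN : Even (2 ^ n) := Nat.even_pow.2 ⟨even_two, by omega⟩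
  have hgsupp := SupportedInRange.gfilter hsupp
  have hHH := sum_fin_mul_emod_sub_two_mul hsupp hsupp hN hNM fun t ht =>
    sum_mul_add_of_even hnorm horth ht
  have hGG := sum_fin_mul_emod_sub_two_mul hgsupp hgsupp hN hNM (c := 1) fun t ht => by
    simp only [sum_gfilter_mul_gfilter_add hsupp ht, sum_mul_add_of_even hnorm horth ht.neg,
      neg_eq_zero]
  have hHG := sum_fin_mul_emod_sub_two_mul hsupp hgsupp hN hNM (c := 0) fun t ht => by
    rw [sum_mul_gfilter_add_eq_zero ⟨K, by omega⟩ hsupp ht, ite_self]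
  push_cast at hHH hGG hHG
  rw [mem_unitaryGroup_iff]
  ext r r'
  simp only [mul_apply, star_apply, Wker, one_apply, Fin.ext_iff]
  by_cases hr : (r : ℕ) < 2 ^ n / 2 <;> by_cases hr' : (r' : ℕ) < 2 ^ n / 2 <;>
    simp only [hr, hr', if_true, if_false, Complex.star_def, Complex.conj_ofReal,
      ← Complex.ofReal_mul, ← Complex.ofReal_sum]
  · rw [hHH _ _ (by omega) (by omega)]
    split_ifs <;> simp
  · rw [hHG _ _ (by omega) (by omega), ite_self, if_neg (by omega), Complex.ofReal_zero]
  · simp only [mul_comm (gfilter M h _)]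
    rw [hHG _ _ (by omega) (by omega), ite_self, if_neg (by omega), Complex.ofReal_zero]
  · rw [hGG _ _ (by omega) (by omega)]
    split_ifs <;> first | (exfalso; omega) | simp

/-- if the filter coefficients satisfy `Σ_ℓ h_ℓ² = 1` and the shifted
orthogonality conditions `Σ_ℓ h_ℓ h_{ℓ+2k} = 0` for all `k ≠ 0`, then the kernel
matrix `W` built from them is unitary.  Here `M = 2K`, `N = 2^n ≥ 2M`, and
`h : ℤ → ℝ` vanishes outside `[0, M−1]`. -/
theorem Wker_unitary (n M K : ℕ) (hn : 1 ≤ n) (hK : 0 < K) (hM : M = 2 * K)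
    (hNM : 2 * M ≤ 2^n) (h : ℤ → ℝ)
    (hsupp : ∀ k : ℤ, (k < 0 ∨ (M : ℤ) ≤ k) → h k = 0)
    (hnorm : ∑ ℓ ∈ Finset.range M, (h ℓ)^2 = 1)
    (horth : ∀ k : ℤ, k ≠ 0 → ∑ ℓ ∈ Finset.range M, h ℓ * h (ℓ + 2 * k) = 0) :
    Wker n M h ∈ Matrix.unitaryGroup (Fin (2^n)) ℂ :=
  Wker_unitary_general n M K hn hM hNM h hsupp hnorm horth
end

section
/- Let U = Σ_ℓ h_ℓ U_ℓ with unitaries U_ℓ, and let PREP|0^m⟩ = (1/√h) Σ_ℓ √|h_ℓ| |ℓ⟩, UNPREP†|0^m⟩ = (1/√h) Σ_ℓ sign(h_ℓ)√|h_ℓ| |ℓ⟩ with h = Σ_ℓ |h_ℓ|, and SELECT|ℓ⟩|j⟩ = |ℓ⟩ U_ℓ|j⟩. Then for any n-qubit state |ψ⟩, (⟨0^m| ⊗ I_n)(UNPREP ⊗ I_n) SELECT (PREP ⊗ I_n) |0^m⟩|ψ⟩ = (1/h) U|ψ⟩. -/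
open Matrix

lemma kron_mulVec {a b : ℕ} (A : Matrix (Fin a) (Fin a) ℂ) (B : Matrix (Fin b) (Fin b) ℂ)
    (x : Fin a → ℂ) (y : Fin b → ℂ) :
    (Matrix.kroneckerMap (· * ·) A B) *ᵥ (fun p => x p.1 * y p.2) =
      fun p => (A *ᵥ x) p.1 * (B *ᵥ y) p.2 := by
  funext p
  simp only [mulVec, dotProduct, kroneckerMap, Fintype.sum_prod_type, of_apply]
  rw [Finset.sum_mul_sum]
  congr 1; funext q1; congr 1; funext q2; ring

lemma sign_mul_abs' (x : ℝ) : Real.sign x * |x| = x := by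
  rcases lt_trichotomy x 0 with hx | hx | hx
  · rw [Real.sign_of_neg hx, abs_of_neg hx]; ring
  · simp [hx]
  · rw [Real.sign_of_pos hx, abs_of_pos hx, one_mul]

lemma sum_fin_lt {N M : ℕ} (hMN : M ≤ N) (F : Fin M → ℂ) :
    ∑ ℓ' : Fin N, (if hlt : (ℓ' : ℕ) < M then F ⟨ℓ', hlt⟩ else 0) = ∑ ℓ : Fin M, F ℓ := by
  have h2 : ∑ ℓ : Fin M, F ℓ =
      ∑ ℓ : Fin M, (fun i => if hlt : i < M then F ⟨i, hlt⟩ else 0) (ℓ : ℕ) := by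
    refine Finset.sum_congr rfl fun ℓ _ => ?_
    simp [ℓ.isLt]
  rw [Fin.sum_univ_eq_sum_range (fun i => if hlt : i < M then F ⟨i, hlt⟩ else 0) N, h2,
      Fin.sum_univ_eq_sum_range (fun i => if hlt : i < M then F ⟨i, hlt⟩ else 0) M]
  refine (Finset.sum_subset (Finset.range_subset_range.2 hMN) ?_).symm
  intro i _ hi
  simp [Finset.mem_range.not.1 hi]


/-- the prepare–select–unprepare LCU identity.  With
`PREP|0^m⟩ = (1/√h) Σ_ℓ √|h_ℓ| |ℓ⟩`, `UNPREP†|0^m⟩ = (1/√h) Σ_ℓ sign(h_ℓ)√|h_ℓ| |ℓ⟩`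
(`h = Σ_ℓ |h_ℓ|`), and `SELECT|ℓ⟩|j⟩ = |ℓ⟩U_ℓ|j⟩` (identity on unused ancilla basis
states), for any state `|ψ⟩`:
`(⟨0^m| ⊗ I_n)(UNPREP ⊗ I_n) SELECT (PREP ⊗ I_n) |0^m⟩|ψ⟩ = (1/h) U|ψ⟩`
where `U = Σ_ℓ h_ℓ U_ℓ`. -/
theorem lcu_prep_select_unprep (m n M : ℕ) (hMm : M ≤ 2^m)
    (h : Fin M → ℝ) (hne : ∃ ℓ, h ℓ ≠ 0)
    (htot : ℝ) (hhtot : htot = ∑ ℓ, |h ℓ|)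
    (U : Fin M → Matrix (Fin (2^n)) (Fin (2^n)) ℂ)
    (hU : ∀ ℓ, U ℓ ∈ Matrix.unitaryGroup (Fin (2^n)) ℂ)
    (PREP UNPREP : Matrix (Fin (2^m)) (Fin (2^m)) ℂ)
    (hPREP : PREP *ᵥ (fun i => if (i : ℕ) = 0 then 1 else 0) =
      fun ℓ' : Fin (2^m) => if hlt : (ℓ' : ℕ) < M then
        ((Real.sqrt |h ⟨ℓ', hlt⟩| / Real.sqrt htot : ℝ) : ℂ) else 0)
    (hUNPREP : UNPREPᴴ *ᵥ (fun i => if (i : ℕ) = 0 then 1 else 0) =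
      fun ℓ' : Fin (2^m) => if hlt : (ℓ' : ℕ) < M then
        ((Real.sign (h ⟨ℓ', hlt⟩) * Real.sqrt |h ⟨ℓ', hlt⟩| / Real.sqrt htot : ℝ) : ℂ) else 0)
    (SELECT : Matrix (Fin (2^m) × Fin (2^n)) (Fin (2^m) × Fin (2^n)) ℂ)
    (hSELECT : SELECT = fun p q =>
      if p.1 = q.1 then
        (if hlt : (p.1 : ℕ) < M then U ⟨p.1, hlt⟩ p.2 q.2 else if p.2 = q.2 then 1 else 0)
      else 0)
    (ψ : Fin (2^n) → ℂ) :
    (fun j => ((Matrix.kroneckerMap (· * ·) UNPREP (1 : Matrix (Fin (2^n)) (Fin (2^n)) ℂ)) *ᵥ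
        (SELECT *ᵥ ((Matrix.kroneckerMap (· * ·) PREP (1 : Matrix (Fin (2^n)) (Fin (2^n)) ℂ)) *ᵥ
          (fun p => (if (p.1 : ℕ) = 0 then 1 else 0) * ψ p.2))))
        (⟨0, Nat.two_pow_pos m⟩, j)) =
      (1 / (htot : ℂ)) • ((∑ ℓ, ((h ℓ : ℝ) : ℂ) • U ℓ) *ᵥ ψ) := by
  -- positivity of htot
  have hpos : 0 < htot := by
    obtain ⟨ℓ0, hℓ0⟩ := hne
    rw [hhtot]
    exact Finset.sum_pos' (fun i _ => abs_nonneg _)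
      ⟨ℓ0, Finset.mem_univ _, abs_pos.2 hℓ0⟩
  -- step 1
  have h1 : (Matrix.kroneckerMap (· * ·) PREP (1 : Matrix (Fin (2^n)) (Fin (2^n)) ℂ)) *ᵥ
        (fun p => (if (p.1 : ℕ) = 0 then 1 else 0) * ψ p.2) =
      fun p => (if hlt : (p.1 : ℕ) < M then
        ((Real.sqrt |h ⟨p.1, hlt⟩| / Real.sqrt htot : ℝ) : ℂ) else 0) * ψ p.2 := by
    have hk := kron_mulVec PREP (1 : Matrix (Fin (2^n)) (Fin (2^n)) ℂ)
      (fun i => if (i : ℕ) = 0 then 1 else 0) ψ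
    rw [hPREP, one_mulVec] at hk
    exact hk
  -- step 2
  have h2 : SELECT *ᵥ (fun p => (if hlt : (p.1 : ℕ) < M then
        ((Real.sqrt |h ⟨p.1, hlt⟩| / Real.sqrt htot : ℝ) : ℂ) else 0) * ψ p.2) =
      fun p => if hlt : (p.1 : ℕ) < M then
        ((Real.sqrt |h ⟨p.1, hlt⟩| / Real.sqrt htot : ℝ) : ℂ) * ((U ⟨p.1, hlt⟩) *ᵥ ψ) p.2
      else 0 := by
    funext p
    simp only [hSELECT, mulVec, dotProduct, Fintype.sum_prod_type, of_apply]
    by_cases hlt : (p.1 : ℕ) < M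
    · simp only [dif_pos hlt]
      rw [Finset.sum_eq_single p.1]
      · simp only [if_pos rfl, if_true, dif_pos hlt, Finset.mul_sum]
        refine Finset.sum_congr rfl fun q2 _ => ?_
        push_cast
        ring
      · intro q1 _ hq1; simp [Ne.symm hq1]
      · simp
    · simp only [dif_neg hlt]
      rw [Finset.sum_eq_single p.1]
      · simp [hlt]
      · intro q1 _ hq1; simp [Ne.symm hq1]
      · simp
  -- row of UNPREP
  have hu : ∀ ℓ' : Fin (2^m), UNPREP ⟨0, Nat.two_pow_pos m⟩ ℓ' =
      if hlt : (ℓ' : ℕ) < M then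
        ((Real.sign (h ⟨ℓ', hlt⟩) * Real.sqrt |h ⟨ℓ', hlt⟩| / Real.sqrt htot : ℝ) : ℂ) else 0 := by
    intro ℓ'
    have hc := congrFun hUNPREP ℓ'
    simp only [mulVec, dotProduct, conjTranspose_apply] at hc
    rw [Finset.sum_eq_single (⟨0, Nat.two_pow_pos m⟩ : Fin (2^m))] at hc
    · simp only [if_pos rfl, if_true, mul_one] at hc
      rw [← star_star (UNPREP ⟨0, Nat.two_pow_pos m⟩ ℓ'), hc]
      by_cases hlt : (ℓ' : ℕ) < M <;>
        simp [hlt, RCLike.star_def, Complex.conj_ofReal]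
    · intro i _ hi
      have : (i : ℕ) ≠ 0 := fun hz => hi (Fin.ext hz)
      simp [this]
    · simp
  funext j
  rw [h1, h2]
  simp only [mulVec, dotProduct, Fintype.sum_prod_type, kroneckerMap, of_apply, one_apply]
  -- collapse the k-sum
  have h3 : ∀ ℓ' : Fin (2^m),
      (∑ k : Fin (2^n), UNPREP ⟨0, Nat.two_pow_pos m⟩ ℓ' * (if j = k then 1 else 0) *
        (if hlt : (ℓ' : ℕ) < M then
          ((Real.sqrt |h ⟨ℓ', hlt⟩| / Real.sqrt htot : ℝ) : ℂ) * ((U ⟨ℓ', hlt⟩) *ᵥ ψ) k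
        else 0)) =
      if hlt : (ℓ' : ℕ) < M then
        (((h ⟨ℓ', hlt⟩ : ℝ) : ℂ) / (htot : ℂ)) * ((U ⟨ℓ', hlt⟩) *ᵥ ψ) j else 0 := by
    intro ℓ'
    rw [Finset.sum_eq_single j]
    · rw [hu ℓ']
      by_cases hlt : (ℓ' : ℕ) < M
      · simp only [dif_pos hlt, if_pos rfl, if_true, mul_one]
        rw [← mul_assoc, ← Complex.ofReal_mul]
        have hr : (Real.sign (h ⟨ℓ', hlt⟩) * Real.sqrt |h ⟨ℓ', hlt⟩| / Real.sqrt htot) *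
            (Real.sqrt |h ⟨ℓ', hlt⟩| / Real.sqrt htot) = h ⟨ℓ', hlt⟩ / htot := by
          rw [div_mul_div_comm, Real.mul_self_sqrt hpos.le,
            mul_assoc, Real.mul_self_sqrt (abs_nonneg _), sign_mul_abs' _]
        rw [hr, Complex.ofReal_div]
      · simp [hlt]
    · intro k _ hk; simp [Ne.symm hk]
    · simp
  refine Eq.trans (Finset.sum_congr rfl fun ℓ' _ => h3 ℓ') ?_
  rw [sum_fin_lt hMm (fun ℓ => ((h ℓ : ℝ) : ℂ) / (htot : ℂ) * ((U ℓ) *ᵥ ψ) j)]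
  simp only [Pi.smul_apply, smul_eq_mul, mulVec, dotProduct, Matrix.sum_apply,
    Matrix.smul_apply, Finset.mul_sum, Finset.sum_mul]
  rw [Finset.sum_comm]
  exact Finset.sum_congr rfl fun ℓ _ => Finset.sum_congr rfl fun q _ => by ring
end

section
/- Let V be a unitary on the joint ancilla-system space such that V|0^a⟩|ψ⟩ = sin(α)|0^a⟩W|ψ⟩ + cos(α)|⊥_ψ⟩ for all system states |ψ⟩, where W is unitary and (⟨0^a|⊗I)|⊥_ψ⟩ = 0, and suppose sin(α) = sin(π/(2(2t+1))) for a nonnegative integer t. Then with R = 2|0^a⟩⟨0^a| ⊗ I − I and A = −V R V† R, one has A^t V |0^a⟩|ψ⟩ = |0^a⟩W|ψ⟩ exactly. -/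
/-!
The corner block `(⟨0^a| ⊗ I) V (|0^a⟩ ⊗ I)` of `V` is `sin α • W`, so for a real `sin α` and a
unitary `W` the vector `V†|0^a⟩W|ψ⟩` has ancilla-zero component `sin α |0^a⟩|ψ⟩`. Hence the plane
spanned by the good vector `|0^a⟩W|ψ⟩` and the bad vector `cos α |⊥_ψ⟩` is invariant under
`A = −V R V† R`, on which `A` is a rotation by `2α`: `A^k V|0^a⟩|ψ⟩` has good amplitude
`sin((2k+1)α)`. Since `2t+1` is odd, `sin((2t+1)α)` depends only on `sin α`, so it equals
`sin(π/2) = 1`, and the bad amplitude vanishes.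
-/

open Matrix

/-- The reflection `R = 2|0^a⟩⟨0^a| ⊗ I − I` on the joint ancilla–system space. -/
def Rrefl (a n : ℕ) : Matrix (Fin (2^a) × Fin (2^n)) (Fin (2^a) × Fin (2^n)) ℂ :=
  fun p q => if p = q then (if (p.1 : ℕ) = 0 then 1 else -1) else 0

/-- The state `|0^a⟩|ψ⟩` on the joint ancilla–system space. -/
def joinZero (a n : ℕ) (ψ : Fin (2^n) → ℂ) : Fin (2^a) × Fin (2^n) → ℂ :=
  fun p => (if (p.1 : ℕ) = 0 then 1 else 0) * ψ p.2

open Real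

theorem Real.sin_odd_mul_eq_of_sin_eq {x y : ℝ} (h : sin x = sin y) (k : ℕ) :
    sin ((2 * k + 1) * x) = sin ((2 * k + 1) * y) := by
  obtain ⟨m, hm | hm⟩ := sin_eq_sin_iff.1 h
  · have : (2 * k + 1) * y = (2 * k + 1) * x + ((2 * k + 1) * m : ℤ) * (2 * π) := by
      rw [hm]; push_cast; ring
    rw [this, sin_add_int_mul_two_pi]
  · have : (2 * k + 1) * y = π - (2 * k + 1) * x + (2 * k * m + k + m : ℤ) * (2 * π) := by
      rw [hm]; push_cast; ring
    rw [this, sin_add_int_mul_two_pi, sin_pi_sub]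

section Rotation

variable {ι : Type*} [Fintype ι] [DecidableEq ι]

/-- The bad amplitude `q` is `cos ((2k+1)α) / cos α`, a polynomial in `sin α`; it is specified
through `cos α * q` because `cos α` may vanish. -/
theorem pow_mulVec_eq_sin_odd_mul (A : Matrix ι ι ℂ) (g b : ι → ℂ) (α : ℝ)
    (hAg : A *ᵥ g = (1 - 2 * (sin α : ℂ) ^ 2) • g - (2 * (sin α : ℂ)) • b)
    (hAb : A *ᵥ b = (2 * (sin α : ℂ) * (1 - (sin α : ℂ) ^ 2)) • g + (1 - 2 * (sin α : ℂ) ^ 2) • b)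
    (k : ℕ) :
    ∃ q : ℝ, cos α * q = cos ((2 * k + 1) * α) ∧
      (A ^ k) *ᵥ ((sin α : ℂ) • g + b) = (sin ((2 * k + 1) * α) : ℂ) • g + (q : ℂ) • b := by
  induction k with
  | zero => exact ⟨1, by simp, by simp⟩
  | succ k ih =>
    obtain ⟨q, hq, hk⟩ := ih
    set S := sin ((2 * k + 1) * α)
    have hangle : (2 * ((k + 1 : ℕ) : ℝ) + 1) * α = (2 * k + 1) * α + 2 * α := by push_cast; ring
    have hpyth := sin_sq_add_cos_sq α
    refine ⟨-2 * sin α * S + (1 - 2 * sin α ^ 2) * q, ?_, ?_⟩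
    · rw [hangle, cos_add, cos_two_mul, sin_two_mul]
      linear_combination (1 - 2 * sin α ^ 2) * hq - 2 * cos ((2 * k + 1) * α) * hpyth
    · have hS : sin ((2 * ((k + 1 : ℕ) : ℝ) + 1) * α) =
          (1 - 2 * sin α ^ 2) * S + 2 * sin α * (1 - sin α ^ 2) * q := by
        rw [hangle, sin_add, cos_two_mul, sin_two_mul]
        linear_combination (-2 * sin α * cos α) * hq + (2 * S + 2 * sin α * q) * hpyth
      rw [pow_succ', ← mulVec_mulVec, hk, mulVec_add, mulVec_smul, mulVec_smul, hAg, hAb, hS]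
      push_cast
      module

end Rotation

section Amplifier

variable {ι : Type*} [Fintype ι] [DecidableEq ι] {V R : Matrix ι ι ℂ} {u g b : ι → ℂ} {s : ℂ}

theorem neg_mul_mul_conjTranspose_mul_mulVec (hV : V ∈ unitaryGroup ι ℂ)
    (hRu : R *ᵥ u = u) (hRg : R *ᵥ g = g) (hRb : R *ᵥ b = -b)
    (hRd : R *ᵥ (Vᴴ *ᵥ g - s • u) = -(Vᴴ *ᵥ g - s • u)) (hVu : V *ᵥ u = s • g + b) :
    (-(V * R * Vᴴ * R)) *ᵥ g = (1 - 2 * s ^ 2) • g - (2 * s) • b ∧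
      (-(V * R * Vᴴ * R)) *ᵥ b = (2 * s * (1 - s ^ 2)) • g + (1 - 2 * s ^ 2) • b := by
  set d := Vᴴ *ᵥ g - s • u with hd
  have hVg : Vᴴ *ᵥ g = s • u + d := by rw [hd]; abel
  have hVd : V *ᵥ d = (1 - s ^ 2) • g - s • b := by
    rw [hd, mulVec_sub, mulVec_smul, mulVec_mulVec, ← star_eq_conjTranspose,
      mem_unitaryGroup_iff.1 hV, one_mulVec, hVu]
    module
  have hVb : Vᴴ *ᵥ b = (1 - s ^ 2) • u - s • d := by
    have hb : b = V *ᵥ u - s • g := by rw [hVu]; abel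
    rw [hb, mulVec_sub, mulVec_smul, mulVec_mulVec, ← star_eq_conjTranspose,
      mem_unitaryGroup_iff'.1 hV, one_mulVec, star_eq_conjTranspose, hVg]
    module
  simp only [neg_mulVec, ← mulVec_mulVec, hRg, hRb, hVg, hVb, mulVec_add, mulVec_sub, mulVec_neg,
    mulVec_smul, hRu, hRd, hVu, hVd]
  constructor <;> module

end Amplifier

section Ancilla

variable {a n : ℕ}

def ancillaZero (a : ℕ) : Fin (2 ^ a) := ⟨0, Nat.two_pow_pos a⟩

theorem joinZero_apply_ancillaZero (ψ : Fin (2 ^ n) → ℂ) (j : Fin (2 ^ n)) :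
    joinZero a n ψ (ancillaZero a, j) = ψ j := by
  simp [joinZero, ancillaZero]

theorem joinZero_apply_of_ne (ψ : Fin (2 ^ n) → ℂ) {p : Fin (2 ^ a) × Fin (2 ^ n)}
    (hp : (p.1 : ℕ) ≠ 0) : joinZero a n ψ p = 0 := by
  simp [joinZero, hp]

theorem mulVec_joinZero_apply (M : Matrix (Fin (2 ^ a) × Fin (2 ^ n)) (Fin (2 ^ a) × Fin (2 ^ n)) ℂ)
    (φ : Fin (2 ^ n) → ℂ) (i : Fin (2 ^ a)) (j : Fin (2 ^ n)) :
    (M *ᵥ joinZero a n φ) (i, j) = (M.submatrix (Prod.mk i) (Prod.mk (ancillaZero a)) *ᵥ φ) j := by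
  simp only [mulVec, dotProduct, submatrix_apply, Fintype.sum_prod_type]
  rw [Finset.sum_eq_single (ancillaZero a)]
  · simp only [joinZero_apply_ancillaZero]
  · intro i' _ hi'
    exact Finset.sum_eq_zero fun j' _ => by
      rw [joinZero_apply_of_ne φ (fun h => hi' (Fin.ext h)), mul_zero]
  · simp

theorem Rrefl_mulVec_apply (v : Fin (2 ^ a) × Fin (2 ^ n) → ℂ) (p : Fin (2 ^ a) × Fin (2 ^ n)) :
    (Rrefl a n *ᵥ v) p = if (p.1 : ℕ) = 0 then v p else -v p := by
  simp only [Rrefl, mulVec, dotProduct, ite_mul, one_mul, neg_mul, zero_mul,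
    Finset.sum_ite_eq, Finset.mem_univ, if_true]

theorem Rrefl_mulVec_eq_self {v : Fin (2 ^ a) × Fin (2 ^ n) → ℂ}
    (hv : ∀ p : Fin (2 ^ a) × Fin (2 ^ n), (p.1 : ℕ) ≠ 0 → v p = 0) : Rrefl a n *ᵥ v = v := by
  funext p
  rw [Rrefl_mulVec_apply]
  by_cases hp : (p.1 : ℕ) = 0 <;> simp [hp, hv p]

theorem Rrefl_mulVec_eq_neg {v : Fin (2 ^ a) × Fin (2 ^ n) → ℂ}
    (hv : ∀ j : Fin (2 ^ n), v (ancillaZero a, j) = 0) : Rrefl a n *ᵥ v = -v := by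
  funext p
  rw [Rrefl_mulVec_apply]
  split_ifs with hp
  · rw [show p = (ancillaZero a, p.2) from Prod.ext (Fin.ext hp) rfl, Pi.neg_apply, hv, neg_zero]
  · rfl

theorem submatrix_ancillaZero_eq_smul
    {V : Matrix (Fin (2 ^ a) × Fin (2 ^ n)) (Fin (2 ^ a) × Fin (2 ^ n)) ℂ}
    {W : Matrix (Fin (2 ^ n)) (Fin (2 ^ n)) ℂ} {s c : ℂ}
    (hact : ∀ ψ : Fin (2 ^ n) → ℂ, ∃ perp : Fin (2 ^ a) × Fin (2 ^ n) → ℂ,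
      (∀ j : Fin (2 ^ n), perp (ancillaZero a, j) = 0) ∧
      V *ᵥ joinZero a n ψ = s • joinZero a n (W *ᵥ ψ) + c • perp) :
    V.submatrix (Prod.mk (ancillaZero a)) (Prod.mk (ancillaZero a)) = s • W := by
  refine ext_iff_mulVec.2 fun ψ => funext fun j => ?_
  obtain ⟨perp, hperp, hV⟩ := hact ψ
  rw [← mulVec_joinZero_apply, hV]
  simp [joinZero_apply_ancillaZero, hperp, smul_mulVec]

theorem conjTranspose_mulVec_joinZero_apply_ancillaZero
    {V : Matrix (Fin (2 ^ a) × Fin (2 ^ n)) (Fin (2 ^ a) × Fin (2 ^ n)) ℂ}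
    {W : Matrix (Fin (2 ^ n)) (Fin (2 ^ n)) ℂ} {s : ℂ}
    (hcorner : V.submatrix (Prod.mk (ancillaZero a)) (Prod.mk (ancillaZero a)) = s • W)
    (hW : W ∈ unitaryGroup (Fin (2 ^ n)) ℂ) (ψ : Fin (2 ^ n) → ℂ) (j : Fin (2 ^ n)) :
    (Vᴴ *ᵥ joinZero a n (W *ᵥ ψ)) (ancillaZero a, j) = star s * ψ j := by
  rw [mulVec_joinZero_apply, ← conjTranspose_submatrix, hcorner, conjTranspose_smul,
    smul_mulVec, mulVec_mulVec, ← star_eq_conjTranspose, mem_unitaryGroup_iff'.1 hW,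
    one_mulVec]
  rfl

end Ancilla

/-- exact oblivious amplitude amplification.  If the unitary `V` on the
joint ancilla–system space satisfies
`V|0^a⟩|ψ⟩ = sin α |0^a⟩W|ψ⟩ + cos α |⊥_ψ⟩` for all system states `|ψ⟩`, with `W`
unitary and `(⟨0^a| ⊗ I)|⊥_ψ⟩ = 0`, and `sin α = sin(π/(2(2t+1)))` for a nonnegative
integer `t`, then with `R = 2|0^a⟩⟨0^a| ⊗ I − I` and `A = −V R V† R` one has
`A^t V |0^a⟩|ψ⟩ = |0^a⟩W|ψ⟩` exactly. -/
theorem oblivious_amplitude_amplification (a n t : ℕ) (α : ℝ)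
    (V : Matrix (Fin (2^a) × Fin (2^n)) (Fin (2^a) × Fin (2^n)) ℂ)
    (hV : V ∈ Matrix.unitaryGroup (Fin (2^a) × Fin (2^n)) ℂ)
    (W : Matrix (Fin (2^n)) (Fin (2^n)) ℂ)
    (hW : W ∈ Matrix.unitaryGroup (Fin (2^n)) ℂ)
    (hα : Real.sin α = Real.sin (Real.pi / (2 * (2 * (t : ℝ) + 1))))
    (hact : ∀ ψ : Fin (2^n) → ℂ, ∃ perp : Fin (2^a) × Fin (2^n) → ℂ,
      (∀ j : Fin (2^n), perp (⟨0, Nat.two_pow_pos a⟩, j) = 0) ∧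
      V *ᵥ joinZero a n ψ =
        ((Real.sin α : ℝ) : ℂ) • joinZero a n (W *ᵥ ψ) +
        ((Real.cos α : ℝ) : ℂ) • perp) :
    ∀ ψ : Fin (2^n) → ℂ,
      ((-(V * Rrefl a n * Vᴴ * Rrefl a n)) ^ t) *ᵥ (V *ᵥ joinZero a n ψ) =
        joinZero a n (W *ᵥ ψ) := by
  intro ψ
  obtain ⟨perp, hperp, hVu⟩ := hact ψ
  have hcorner := submatrix_ancillaZero_eq_smul hact
  obtain ⟨hAg, hAb⟩ := neg_mul_mul_conjTranspose_mul_mulVec hV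
    (Rrefl_mulVec_eq_self fun _ => joinZero_apply_of_ne ψ)
    (Rrefl_mulVec_eq_self fun _ => joinZero_apply_of_ne (W *ᵥ ψ))
    (Rrefl_mulVec_eq_neg fun j => by
      rw [Pi.smul_apply, smul_eq_mul]; exact mul_eq_zero_of_right _ (hperp j))
    (Rrefl_mulVec_eq_neg fun j => by
      rw [Pi.sub_apply, conjTranspose_mulVec_joinZero_apply_ancillaZero hcorner hW,
        Pi.smul_apply, joinZero_apply_ancillaZero, Complex.star_def, Complex.conj_ofReal,
        smul_eq_mul, sub_self])
    hVu
  obtain ⟨q, hq, hAt⟩ := pow_mulVec_eq_sin_odd_mul _ _ _ α hAg hAb t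
  have hsin : sin ((2 * t + 1) * α) = 1 := by
    rw [Real.sin_odd_mul_eq_of_sin_eq hα]
    convert sin_pi_div_two using 2
    field_simp
  have hcos : cos ((2 * t + 1) * α) = 0 := by
    nlinarith [sin_sq_add_cos_sq ((2 * t + 1) * α)]
  rw [hVu, hAt, hsin, smul_smul, ← Complex.ofReal_mul, mul_comm, hq, hcos]
  simp
end

section
/- The composition SHUFFLE ∘ (conditional add/subtract of ℓ) realizes P_ℓ: for basis states |ℓ⟩|j⟩, applying |j⟩ ↦ |j−ℓ mod N⟩ when j, ℓ have equal parity (or |j⟩ ↦ |j+ℓ mod N⟩ when the parities differ) followed by SHUFFLE on the second register yields |ℓ⟩ P_ℓ|j⟩. -/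
/-!
All three matrices map basis vectors to basis vectors, so the identity is one about indices.
Row `r` of `P_ℓ` picks column `2r + ℓ` (first half) or `2(r - N/2) + 1 - ℓ` (second half)
mod `N`. Since `N` is even, shifting `j` by `-ℓ` (equal parity) or `+ℓ` (opposite parity)
makes it even or odd respectively, and the shuffle then halves it into the first or second
half; this inverts the row map of `P_ℓ`.
-/

open Matrix

/-- The conditional add/subtract: `|j⟩ ↦ |j−ℓ mod N⟩` when `j` and `ℓ` have equal
parity, and `|j⟩ ↦ |j+ℓ mod N⟩` when their parities differ. -/
def condAddSub (n ℓ : ℕ) : Matrix (Fin (2^n)) (Fin (2^n)) ℂ :=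
  fun i j =>
    if (j : ℕ) % 2 = ℓ % 2 then
      (if (i : ℕ) = ((j : ℕ) + (2^n - ℓ)) % 2^n then 1 else 0)
    else
      (if (i : ℕ) = ((j : ℕ) + ℓ) % 2^n then 1 else 0)

/-- The perfect shuffle: `|q⟩ ↦ |q/2⟩` for even `q` and `|q⟩ ↦ |N/2+(q−1)/2⟩` for
odd `q`. -/
def shuffleMat (n : ℕ) : Matrix (Fin (2^n)) (Fin (2^n)) ℂ :=
  fun i q =>
    if (q : ℕ) % 2 = 0 then (if (i : ℕ) = (q : ℕ) / 2 then 1 else 0)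
    else (if (i : ℕ) = 2^n / 2 + ((q : ℕ) - 1) / 2 then 1 else 0)

theorem Nat.mod_eq_ite_of_lt_two_mul {x N : ℕ} (h : x < 2 * N) :
    x % N = if x < N then x else x - N := by
  split_ifs with hx
  · exact Nat.mod_eq_of_lt hx
  · rw [Nat.mod_eq_sub_mod (by omega), Nat.mod_eq_of_lt (by omega)]

def condAddSubIdx (N ℓ j : ℕ) : ℕ :=
  if j % 2 = ℓ % 2 then (j + (N - ℓ)) % N else (j + ℓ) % N

def shuffleIdx (N q : ℕ) : ℕ :=
  if q % 2 = 0 then q / 2 else N / 2 + (q - 1) / 2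

/-- `P_ℓ⁻¹` on basis indices. -/
def pInvIdx (N ℓ r : ℕ) : ℕ :=
  if r < N / 2 then (2 * r + ℓ) % N else (2 * (r - N / 2) + 1 + (N - ℓ)) % N

theorem condAddSubIdx_lt {N : ℕ} (hN : 0 < N) (ℓ j : ℕ) : condAddSubIdx N ℓ j < N := by
  unfold condAddSubIdx
  split_ifs <;> exact Nat.mod_lt _ hN

theorem shuffleIdx_lt {N q : ℕ} (hN : Even N) (hq : q < N) : shuffleIdx N q < N := by
  obtain ⟨M, rfl⟩ := hN
  unfold shuffleIdx
  split_ifs <;> omega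

theorem pInvIdx_eq_iff {N ℓ r j : ℕ} (hN : Even N) (hℓ : ℓ < N) (hr : r < N) (hj : j < N) :
    pInvIdx N ℓ r = j ↔ r = shuffleIdx N (condAddSubIdx N ℓ j) := by
  obtain ⟨M, rfl⟩ := hN
  unfold pInvIdx condAddSubIdx shuffleIdx
  -- every residue here is of a number below `2N`, so after case splits all is linear
  split_ifs <;> simp (disch := omega) only [Nat.mod_eq_ite_of_lt_two_mul] at * <;>
    split_ifs at * <;> omega

theorem mulVec_single_one_eq_single {N : ℕ} {M : Matrix (Fin N) (Fin N) ℂ} {q : Fin N} {m : ℕ}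
    (hm : m < N) (hM : ∀ i : Fin N, M i q = if (i : ℕ) = m then 1 else 0) :
    M *ᵥ Pi.single q 1 = Pi.single ⟨m, hm⟩ 1 := by
  ext i
  rw [mulVec_single_one, col_apply, hM, Pi.single_apply]
  simp only [Fin.ext_iff]

theorem condAddSub_apply (n ℓ : ℕ) (i j : Fin (2 ^ n)) :
    condAddSub n ℓ i j = if (i : ℕ) = condAddSubIdx (2 ^ n) ℓ j then 1 else 0 := by
  unfold condAddSub condAddSubIdx
  split_ifs <;> rfl

theorem shuffleMat_apply (n : ℕ) (i q : Fin (2 ^ n)) :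
    shuffleMat n i q = if (i : ℕ) = shuffleIdx (2 ^ n) q then 1 else 0 := by
  unfold shuffleMat shuffleIdx
  split_ifs <;> rfl

theorem Pmat_apply (n ℓ : ℕ) (r c : Fin (2 ^ n)) :
    Pmat n ℓ r c = if (c : ℕ) = pInvIdx (2 ^ n) ℓ r then 1 else 0 := by
  unfold Pmat pInvIdx
  split_ifs <;> rfl

theorem Pmat_apply_eq_shuffleIdx_condAddSubIdx {n ℓ : ℕ} (hN : Even (2 ^ n)) (hℓ : ℓ < 2 ^ n)
    (r j : Fin (2 ^ n)) :
    Pmat n ℓ r j = if (r : ℕ) = shuffleIdx (2 ^ n) (condAddSubIdx (2 ^ n) ℓ j) then 1 else 0 := by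
  simp only [Pmat_apply, eq_comm (a := (j : ℕ)), pInvIdx_eq_iff hN hℓ r.2 j.2]

/-- the composition SHUFFLE ∘ (conditional add/subtract of `ℓ`)
realizes `P_ℓ` on every basis state `|j⟩` (the ancilla register `|ℓ⟩` is a
spectator, so the identity is stated on the system register for each `ℓ`). -/
theorem shuffle_condAddSub_realizes_P (n : ℕ) (hn : 1 ≤ n) (ℓ : ℕ) (hℓ : ℓ < 2^n)
    (j : Fin (2^n)) :
    (shuffleMat n) *ᵥ ((condAddSub n ℓ) *ᵥ (fun k => if k = j then (1 : ℂ) else 0)) =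
      (Pmat n ℓ) *ᵥ (fun k => if k = j then (1 : ℂ) else 0) := by
  have hN : Even (2 ^ n) := (Nat.even_pow' (by omega)).mpr even_two
  have hσ := condAddSubIdx_lt (Nat.two_pow_pos n) ℓ j
  have hs := shuffleIdx_lt hN hσ
  have hj : (fun k => if k = j then (1 : ℂ) else 0) = Pi.single j 1 :=
    funext fun k => (Pi.single_apply j 1 k).symm
  rw [hj, mulVec_single_one_eq_single hσ (condAddSub_apply n ℓ · j),
    mulVec_single_one_eq_single hs (shuffleMat_apply n · _),
    mulVec_single_one_eq_single hs (Pmat_apply_eq_shuffleIdx_condAddSubIdx hN hℓ · j)]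
end
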